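/- arXiv:2405.05373 — 3 statements merged into one kernel-verified Lean document; each statement's English description precedes it below -/
import Mathlib

section
/- If a subspace X ⊆ R^n is (t,ε)-spread, then its distortion satisfies Δ(X) ≤ sqrt(n/t)·ε^{-2}. -/
/-- If a subspace `X ⊆ ℝⁿ` is `(t,ε)`-spread, then its distortion satisfies
`Δ(X) ≤ √(n/t) · ε⁻²`, i.e. for every nonzero `x ∈ X`,
`√n · ‖x‖₂ ≤ √(n/t) · ε⁻² · ‖x‖₁`. -/
theorem spread_implies_distortion_bound (n t : ℕ) (ht : 0 < t) (ε : ℝ) (hε : 0 < ε)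
    (X : Submodule ℝ (Fin n → ℝ))
    (hspread : ∀ x ∈ X, ∀ S : Finset (Fin n), S.card ≤ t →
      ε * Real.sqrt (∑ i, x i ^ 2) ≤ Real.sqrt (∑ i ∈ Sᶜ, x i ^ 2)) :
    ∀ x ∈ X, x ≠ 0 →
      Real.sqrt n * Real.sqrt (∑ i, x i ^ 2) ≤
        Real.sqrt ((n : ℝ) / t) * ε⁻¹ ^ 2 * ∑ i, |x i| := by
  intro x hx hx0
  set N := Real.sqrt (∑ i, x i ^ 2) with hN
  set L := ∑ i, |x i| with hL
  obtain ⟨i0, hi0⟩ : ∃ i, x i ≠ 0 := by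
    by_contra h; push_neg at h; exact hx0 (funext h)
  have hsum_pos : 0 < ∑ i, x i ^ 2 :=
    Finset.sum_pos' (fun j _ => sq_nonneg _) ⟨i0, Finset.mem_univ i0, by positivity⟩
  have hNpos : 0 < N := Real.sqrt_pos.mpr hsum_pos
  have hLpos : 0 < L :=
    Finset.sum_pos' (fun j _ => abs_nonneg _) ⟨i0, Finset.mem_univ i0, abs_pos.mpr hi0⟩
  have htR : (0:ℝ) < t := by exact_mod_cast ht
  -- ε ≤ 1
  have hε1 : ε ≤ 1 := by
    have h := hspread x hx ∅ (Nat.zero_le t)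
    rw [Finset.compl_empty] at h
    nlinarith
  set θ := L / t with hθ
  have hθpos : 0 < θ := div_pos hLpos htR
  set S : Finset (Fin n) := Finset.univ.filter (fun i => θ < |x i|) with hS
  have hcardR : (S.card : ℝ) * θ ≤ L := by
    have h1 : (S.card : ℝ) * θ = ∑ _i ∈ S, θ := by
      rw [Finset.sum_const, nsmul_eq_mul]
    have h2 : ∑ _i ∈ S, θ ≤ ∑ i ∈ S, |x i| :=
      Finset.sum_le_sum fun i hi => le_of_lt (Finset.mem_filter.mp hi).2
    have h3 : ∑ i ∈ S, |x i| ≤ L :=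
      Finset.sum_le_sum_of_subset_of_nonneg (Finset.subset_univ S)
        (fun j _ _ => abs_nonneg _)
    linarith
  have hcard : S.card ≤ t := by
    have htheta : θ * ↑t = L := div_mul_cancel₀ L htR.ne'
    have : (S.card : ℝ) ≤ t := by
      nlinarith [mul_le_mul_of_nonneg_right hcardR htR.le]
    exact_mod_cast this
  have hmain := hspread x hx S hcard
  have hcompl : ∑ i ∈ Sᶜ, x i ^ 2 ≤ L ^ 2 / t := by
    have h1 : ∑ i ∈ Sᶜ, x i ^ 2 ≤ ∑ i ∈ Sᶜ, θ * |x i| := by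
      refine Finset.sum_le_sum fun i hi => ?_
      have hmem : ¬ θ < |x i| := by
        have := Finset.mem_compl.mp hi
        simp only [hS, Finset.mem_filter, Finset.mem_univ, true_and] at this
        exact this
      have hle : |x i| ≤ θ := le_of_not_gt hmem
      nlinarith [mul_le_mul_of_nonneg_right hle (abs_nonneg (x i)), sq_abs (x i)]
    have h2 : ∑ i ∈ Sᶜ, θ * |x i| = θ * ∑ i ∈ Sᶜ, |x i| := by
      rw [Finset.mul_sum]
    have h3 : ∑ i ∈ Sᶜ, |x i| ≤ L :=
      Finset.sum_le_sum_of_subset_of_nonneg (Finset.subset_univ _)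
        (fun j _ _ => abs_nonneg _)
    have h4 : θ * ∑ i ∈ Sᶜ, |x i| ≤ θ * L :=
      mul_le_mul_of_nonneg_left h3 (le_of_lt hθpos)
    have h5 : θ * L = L ^ 2 / t := by rw [hθ]; ring
    linarith
  have hsqrt : Real.sqrt (∑ i ∈ Sᶜ, x i ^ 2) ≤ L / Real.sqrt t := by
    have := Real.sqrt_le_sqrt hcompl
    have heq : Real.sqrt (L ^ 2 / t) = L / Real.sqrt t := by
      rw [Real.sqrt_div (sq_nonneg L), Real.sqrt_sq hLpos.le]
    linarith [heq ▸ this]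
  have hkey : ε * N ≤ L / Real.sqrt t := le_trans hmain hsqrt
  have hstpos : 0 < Real.sqrt t := Real.sqrt_pos.mpr htR
  have hNle : N ≤ L / Real.sqrt t * ε⁻¹ := by
    have h := mul_le_mul_of_nonneg_right hkey (by positivity : (0:ℝ) ≤ ε⁻¹)
    calc N = ε * N * ε⁻¹ := by field_simp
    _ ≤ L / Real.sqrt t * ε⁻¹ := h
  have hdiv : Real.sqrt ((n:ℝ)/t) = Real.sqrt n / Real.sqrt t :=
    Real.sqrt_div (Nat.cast_nonneg n) t
  have hstep1 : Real.sqrt n * N ≤ Real.sqrt n / Real.sqrt t * ε⁻¹ * L := by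
    have := mul_le_mul_of_nonneg_left hNle (Real.sqrt_nonneg (n:ℝ))
    calc Real.sqrt n * N ≤ Real.sqrt n * (L / Real.sqrt t * ε⁻¹) := this
    _ = Real.sqrt n / Real.sqrt t * ε⁻¹ * L := by ring
  have hinv1 : (1:ℝ) ≤ ε⁻¹ := by
    nlinarith [mul_inv_cancel₀ hε.ne', inv_pos.mpr hε]
  have hstep2 : Real.sqrt n / Real.sqrt t * ε⁻¹ * L ≤
      Real.sqrt n / Real.sqrt t * ε⁻¹ ^ 2 * L := by
    have hεinv : ε⁻¹ ≤ ε⁻¹ ^ 2 := by nlinarith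
    have h0 : 0 ≤ Real.sqrt n / Real.sqrt t := by positivity
    nlinarith [mul_le_mul_of_nonneg_left hεinv h0]
  rw [hdiv]
  linarith
end

section
/- Every subspace X ⊆ R^n is (n/(2Δ(X)^2), 1/(4Δ(X)))-spread, where Δ(X) is the distortion of X. -/
/-! By Cauchy–Schwarz, `‖x_S‖₁ ≤ √|S| ‖x‖₂ ≤ √n ‖x‖₂ / (√2 Δ)` when `|S| ≤ n / (2Δ²)`, so
the coordinates in `S` carry less than `3/4` of the lower bound `√n ‖x‖₂ / Δ` that the distortion
puts on `‖x‖₁`. The remaining `‖x_{S̄}‖₁ ≥ √n ‖x‖₂ / (4Δ)` is at most `√n ‖x_{S̄}‖₂`, again by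
Cauchy–Schwarz. -/

open Finset Real Fintype

lemma sum_abs_le_sqrt_card_mul_sqrt_sum_sq {ι : Type*} (s : Finset ι) (x : ι → ℝ) :
    ∑ i ∈ s, |x i| ≤ √(#s : ℝ) * √(∑ i ∈ s, x i ^ 2) := by
  simpa using Real.sum_mul_le_sqrt_mul_sqrt s (fun _ ↦ 1) (fun i ↦ |x i|)

lemma mul_sqrt_le_three_quarters_mul_sqrt {Δ k n : ℝ} (hk : 0 ≤ k)
    (h : 2 * Δ ^ 2 * k ≤ n) : Δ * √k ≤ 3 / 4 * √n := by
  have hn : 0 ≤ n := le_trans (by positivity) h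
  refine le_of_pow_le_pow_left₀ two_ne_zero (by positivity) ?_
  rw [mul_pow, mul_pow, sq_sqrt hk, sq_sqrt hn]
  linarith

theorem sqrt_sum_sq_le_four_mul_sqrt_sum_compl_sq {ι : Type*} [Fintype ι] [DecidableEq ι]
    {x : ι → ℝ} {S : Finset ι} {Δ : ℝ} (hΔ : 0 < Δ)
    (hx : √(card ι : ℝ) * √(∑ i, x i ^ 2) ≤ Δ * ∑ i, |x i|)
    (hS : 2 * Δ ^ 2 * #S ≤ card ι) :
    √(∑ i, x i ^ 2) ≤ 4 * Δ * √(∑ i ∈ Sᶜ, x i ^ 2) := by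
  rcases isEmpty_or_nonempty ι with _ | _
  · rw [Fintype.sum_empty, sqrt_zero]
    positivity
  set u := √(card ι : ℝ)
  set a := √(∑ i, x i ^ 2)
  set b := √(∑ i ∈ Sᶜ, x i ^ 2)
  have head : Δ * ∑ i ∈ S, |x i| ≤ 3 / 4 * u * a :=
    calc Δ * ∑ i ∈ S, |x i| ≤ Δ * (√(#S : ℝ) * √(∑ i ∈ S, x i ^ 2)) := by
          gcongr; exact sum_abs_le_sqrt_card_mul_sqrt_sum_sq S x
      _ ≤ Δ * √(#S : ℝ) * a := by
          rw [← mul_assoc]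
          gcongr
          exact sqrt_le_sqrt <|
            sum_le_sum_of_subset_of_nonneg (subset_univ S) fun i _ _ ↦ sq_nonneg _
      _ ≤ 3 / 4 * u * a := by
          gcongr ?_ * a
          exact mul_sqrt_le_three_quarters_mul_sqrt (Nat.cast_nonneg _) hS
  have tail : ∑ i ∈ Sᶜ, |x i| ≤ u * b :=
    (sum_abs_le_sqrt_card_mul_sqrt_sum_sq Sᶜ x).trans <| by
      gcongr; exact sqrt_le_sqrt (mod_cast card_le_univ Sᶜ)
  have mass : u * a ≤ 3 / 4 * u * a + Δ * (u * b) :=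
    calc u * a ≤ Δ * ∑ i, |x i| := hx
      _ = Δ * ∑ i ∈ S, |x i| + Δ * ∑ i ∈ Sᶜ, |x i| := by rw [← mul_add, sum_add_sum_compl]
      _ ≤ 3 / 4 * u * a + Δ * (u * b) := by gcongr
  have hu : 0 < u := sqrt_pos.2 (Nat.cast_pos.2 card_pos)
  refine le_of_mul_le_mul_left ?_ hu
  linarith

theorem distortion_implies_spread_general (n : ℕ) (X : Submodule ℝ (Fin n → ℝ)) (Δ : ℝ)
    (hdist : ∀ x ∈ X, x ≠ 0 →
      Real.sqrt n * Real.sqrt (∑ i, x i ^ 2) ≤ Δ * ∑ i, |x i|) :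
    ∀ x ∈ X, ∀ S : Finset (Fin n), (S.card : ℝ) ≤ (n : ℝ) / (2 * Δ ^ 2) →
      (1 / (4 * Δ)) * Real.sqrt (∑ i, x i ^ 2) ≤ Real.sqrt (∑ i ∈ Sᶜ, x i ^ 2) := by
  intro x hx S hS
  rcases le_or_gt Δ 0 with hΔ | hΔ
  · have hcoef : 1 / (4 * Δ) ≤ 0 := div_nonpos_of_nonneg_of_nonpos zero_le_one (by linarith)
    exact (mul_nonpos_of_nonpos_of_nonneg hcoef (sqrt_nonneg _)).trans (sqrt_nonneg _)
  have hx' : √(card (Fin n) : ℝ) * √(∑ i, x i ^ 2) ≤ Δ * ∑ i, |x i| := by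
    rcases eq_or_ne x 0 with rfl | hx0
    · simp
    · simpa using hdist x hx hx0
  have hS' : 2 * Δ ^ 2 * #S ≤ card (Fin n) := by
    rwa [Fintype.card_fin, ← le_div_iff₀' (by positivity)]
  rw [one_div, inv_mul_le_iff₀ (by positivity)]
  exact sqrt_sum_sq_le_four_mul_sqrt_sum_compl_sq hΔ hx' hS'

/-- Every subspace `X ⊆ ℝⁿ` with distortion at most `Δ` is
`(n/(2Δ²), 1/(4Δ))`-spread. -/
theorem distortion_implies_spread (n : ℕ) (X : Submodule ℝ (Fin n → ℝ)) (Δ : ℝ)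
    (hΔ1 : 1 ≤ Δ)
    (hdist : ∀ x ∈ X, x ≠ 0 →
      Real.sqrt n * Real.sqrt (∑ i, x i ^ 2) ≤ Δ * ∑ i, |x i|) :
    ∀ x ∈ X, ∀ S : Finset (Fin n), (S.card : ℝ) ≤ (n : ℝ) / (2 * Δ ^ 2) →
      (1 / (4 * Δ)) * Real.sqrt (∑ i, x i ^ 2) ≤ Real.sqrt (∑ i ∈ Sᶜ, x i ^ 2) :=
  distortion_implies_spread_general n X Δ hdist
end

section
/- For any vectors a, x ∈ R^d, ⟨a,x⟩^4 = ⟨Shift(a^{⊗4}), x^{⊗4}⟩, where Shift redistributes entries of the 4-tensor a^{⊗4} as specified. -/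
open Finset

/-- The `Shift` operation on a `d²×d²` matrix indexed by pairs. -/
noncomputable def Shift {d : ℕ} (A : (Fin d × Fin d) → (Fin d × Fin d) → ℝ) :
    (Fin d × Fin d) → (Fin d × Fin d) → ℝ := fun p q =>
  if (p.1 = p.2 ∧ p.1 ≠ q.1 ∧ p.1 ≠ q.2) ∨ (q.1 = q.2 ∧ q.1 ≠ p.1 ∧ q.1 ≠ p.2) then 0
  else if p.1 ≠ p.2 ∧ q.1 ≠ q.2 ∧ ({p.1, p.2, q.1, q.2} : Finset (Fin d)).card ≤ 3 then
    (3 / 2) * A p q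
  else A p q

lemma triple_card {α : Type*} [DecidableEq α] (u y z : α) : ({u, y, z} : Finset α).card ≤ 3 := by
  apply le_trans (card_insert_le _ _)
  apply Nat.succ_le_succ
  apply le_trans (card_insert_le _ _)
  apply Nat.succ_le_succ
  simp

lemma card_le_three_iff {d : ℕ} (i j k l : Fin d) (hij : i ≠ j) (hkl : k ≠ l) :
    (({i, j, k, l} : Finset (Fin d)).card ≤ 3) ↔ (i = k ∨ i = l ∨ j = k ∨ j = l) := by
  constructor
  · intro h
    by_contra hc
    push_neg at hc
    obtain ⟨h1, h2, h3, h4⟩ := hc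
    have : ({i, j, k, l} : Finset (Fin d)).card = 4 := by
      rw [card_insert_of_notMem (by simp [h1, h2, hij]),
          card_insert_of_notMem (by simp [h3, h4]),
          card_insert_of_notMem (by simp [hkl]), card_singleton]
    omega
  · intro h
    rcases h with h | h | h | h <;> subst h
    · exact le_trans (card_le_card (by intro m; simp; try tauto)) (triple_card i j l)
    · exact le_trans (card_le_card (by intro m; simp; try tauto)) (triple_card i j k)
    · exact le_trans (card_le_card (by intro m; simp; try tauto)) (triple_card i j l)
    · exact le_trans (card_le_card (by intro m; simp; try tauto)) (triple_card i j k)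

lemma shift_decomp {d : ℕ} (a x : Fin d → ℝ) (i j k l : Fin d) :
    Shift (fun p q => a p.1 * a p.2 * a q.1 * a q.2) (i, j) (k, l) * (x i * x j * x k * x l)
      = a i * x i * (a j * x j) * (a k * x k) * (a l * x l)
        + (if i ≠ j ∧ k ≠ l ∧ i = k then (1/2) * (a i * x i * (a j * x j) * (a k * x k) * (a l * x l)) else 0)
        + (if i ≠ j ∧ k ≠ l ∧ i = l then (1/2) * (a i * x i * (a j * x j) * (a k * x k) * (a l * x l)) else 0)
        + (if i ≠ j ∧ k ≠ l ∧ j = k then (1/2) * (a i * x i * (a j * x j) * (a k * x k) * (a l * x l)) else 0)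
        + (if i ≠ j ∧ k ≠ l ∧ j = l then (1/2) * (a i * x i * (a j * x j) * (a k * x k) * (a l * x l)) else 0)
        + (if i ≠ j ∧ i = k ∧ j = l then (-(1/2)) * (a i * x i * (a j * x j) * (a k * x k) * (a l * x l)) else 0)
        + (if i ≠ j ∧ i = l ∧ j = k then (-(1/2)) * (a i * x i * (a j * x j) * (a k * x k) * (a l * x l)) else 0)
        + (if i = j ∧ i ≠ k ∧ i ≠ l then (-1) * (a i * x i * (a j * x j) * (a k * x k) * (a l * x l)) else 0)
        + (if k = l ∧ k ≠ i ∧ k ≠ j then (-1) * (a i * x i * (a j * x j) * (a k * x k) * (a l * x l)) else 0)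
        + (if i = j ∧ k = l ∧ i ≠ k then (1:ℝ) * (a i * x i * (a j * x j) * (a k * x k) * (a l * x l)) else 0) := by
  have hc : ∀ (hij : i ≠ j) (hkl : k ≠ l),
      (({i, j, k, l} : Finset (Fin d)).card ≤ 3) ↔ (i = k ∨ i = l ∨ j = k ∨ j = l) :=
    fun hij hkl => card_le_three_iff i j k l hij hkl
  unfold Shift
  by_cases h1 : i = j <;> by_cases h2 : k = l <;> by_cases h3 : i = k <;>
    by_cases h4 : i = l <;> by_cases h5 : j = k <;> by_cases h6 : j = l <;>
    simp_all <;> (try ring1) <;> split_ifs <;> (try simp_all) <;> ring1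

section evals
variable {d : ℕ} (a x : Fin d → ℝ) (r : ℝ)

lemma evalE1 :
    (∑ i, ∑ j, ∑ k, ∑ l, if i ≠ j ∧ k ≠ l ∧ i = k then
        r * (a i * x i * (a j * x j) * (a k * x k) * (a l * x l)) else 0)
    = r * ∑ i, ∑ j, ∑ l, (if i ≠ j ∧ i ≠ l then
        a i * x i * (a i * x i) * (a j * x j) * (a l * x l) else 0) := by
  rw [Finset.mul_sum]
  refine Finset.sum_congr rfl fun i _ => ?_
  rw [Finset.mul_sum]
  refine Finset.sum_congr rfl fun j _ => ?_
  rw [Finset.mul_sum]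
  refine (Finset.sum_eq_single_of_mem i (Finset.mem_univ i) fun b _ hb => ?_).trans ?_
  · simp [Ne.symm hb]
  · refine Finset.sum_congr rfl fun l _ => ?_
    split_ifs <;> first | ring1 | (exfalso; tauto)

lemma evalE2 :
    (∑ i, ∑ j, ∑ k, ∑ l, if i ≠ j ∧ k ≠ l ∧ i = l then
        r * (a i * x i * (a j * x j) * (a k * x k) * (a l * x l)) else 0)
    = r * ∑ i, ∑ j, ∑ l, (if i ≠ j ∧ i ≠ l then
        a i * x i * (a i * x i) * (a j * x j) * (a l * x l) else 0) := by
  rw [Finset.mul_sum]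
  refine Finset.sum_congr rfl fun i _ => ?_
  rw [Finset.mul_sum]
  refine Finset.sum_congr rfl fun j _ => ?_
  rw [Finset.mul_sum]
  refine Finset.sum_congr rfl fun k _ => ?_
  refine (Finset.sum_eq_single_of_mem i (Finset.mem_univ i) fun b _ hb => ?_).trans ?_
  · simp [Ne.symm hb]
  · split_ifs <;> first | ring1 | (exfalso; tauto)

lemma evalE3 :
    (∑ i, ∑ j, ∑ k, ∑ l, if i ≠ j ∧ k ≠ l ∧ j = k then
        r * (a i * x i * (a j * x j) * (a k * x k) * (a l * x l)) else 0)
    = r * ∑ i, ∑ j, ∑ l, (if i ≠ j ∧ i ≠ l then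
        a i * x i * (a i * x i) * (a j * x j) * (a l * x l) else 0) := by
  have h : (∑ i, ∑ j, ∑ k, ∑ l, if i ≠ j ∧ k ≠ l ∧ j = k then
        r * (a i * x i * (a j * x j) * (a k * x k) * (a l * x l)) else 0)
      = ∑ i, ∑ j, ∑ l, (if i ≠ j ∧ j ≠ l then
        r * (a i * x i * (a j * x j) * (a j * x j) * (a l * x l)) else 0) := by
    refine Finset.sum_congr rfl fun i _ => Finset.sum_congr rfl fun j _ => ?_
    refine (Finset.sum_eq_single_of_mem j (Finset.mem_univ j) fun b _ hb => ?_).trans ?_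
    · simp [Ne.symm hb]
    · refine Finset.sum_congr rfl fun l _ => ?_
      split_ifs <;> first | ring1 | (exfalso; tauto)
  rw [h, Finset.sum_comm, Finset.mul_sum]
  refine Finset.sum_congr rfl fun j _ => ?_
  rw [Finset.mul_sum]
  refine Finset.sum_congr rfl fun i _ => ?_
  rw [Finset.mul_sum]
  refine Finset.sum_congr rfl fun l _ => ?_
  split_ifs <;> first | ring1 | (exfalso; tauto)

lemma evalE4 :
    (∑ i, ∑ j, ∑ k, ∑ l, if i ≠ j ∧ k ≠ l ∧ j = l then
        r * (a i * x i * (a j * x j) * (a k * x k) * (a l * x l)) else 0)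
    = r * ∑ i, ∑ j, ∑ l, (if i ≠ j ∧ i ≠ l then
        a i * x i * (a i * x i) * (a j * x j) * (a l * x l) else 0) := by
  have h : (∑ i, ∑ j, ∑ k, ∑ l, if i ≠ j ∧ k ≠ l ∧ j = l then
        r * (a i * x i * (a j * x j) * (a k * x k) * (a l * x l)) else 0)
      = ∑ i, ∑ j, ∑ k, (if i ≠ j ∧ k ≠ j then
        r * (a i * x i * (a j * x j) * (a k * x k) * (a j * x j)) else 0) := by
    refine Finset.sum_congr rfl fun i _ => Finset.sum_congr rfl fun j _ =>
      Finset.sum_congr rfl fun k _ => ?_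
    refine (Finset.sum_eq_single_of_mem j (Finset.mem_univ j) fun b _ hb => ?_).trans ?_
    · simp [Ne.symm hb]
    · split_ifs <;> first | ring1 | (exfalso; tauto)
  rw [h, Finset.sum_comm, Finset.mul_sum]
  refine Finset.sum_congr rfl fun j _ => ?_
  rw [Finset.mul_sum]
  refine Finset.sum_congr rfl fun i _ => ?_
  rw [Finset.mul_sum]
  refine Finset.sum_congr rfl fun k _ => ?_
  split_ifs <;> first | ring1 | (exfalso; tauto)

lemma evalF1 :
    (∑ i, ∑ j, ∑ k, ∑ l, if i ≠ j ∧ i = k ∧ j = l then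
        r * (a i * x i * (a j * x j) * (a k * x k) * (a l * x l)) else 0)
    = r * ∑ i, ∑ j, (if i ≠ j then
        a i * x i * (a i * x i) * (a j * x j) * (a j * x j) else 0) := by
  rw [Finset.mul_sum]
  refine Finset.sum_congr rfl fun i _ => ?_
  rw [Finset.mul_sum]
  refine Finset.sum_congr rfl fun j _ => ?_
  refine (Finset.sum_eq_single_of_mem i (Finset.mem_univ i) fun b _ hb => ?_).trans ?_
  · simp [Ne.symm hb]
  · refine (Finset.sum_eq_single_of_mem j (Finset.mem_univ j) fun b _ hb => ?_).trans ?_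
    · simp [Ne.symm hb]
    · split_ifs <;> first | ring1 | (exfalso; tauto)

lemma evalF2 :
    (∑ i, ∑ j, ∑ k, ∑ l, if i ≠ j ∧ i = l ∧ j = k then
        r * (a i * x i * (a j * x j) * (a k * x k) * (a l * x l)) else 0)
    = r * ∑ i, ∑ j, (if i ≠ j then
        a i * x i * (a i * x i) * (a j * x j) * (a j * x j) else 0) := by
  rw [Finset.mul_sum]
  refine Finset.sum_congr rfl fun i _ => ?_
  rw [Finset.mul_sum]
  refine Finset.sum_congr rfl fun j _ => ?_
  refine (Finset.sum_eq_single_of_mem j (Finset.mem_univ j) fun b _ hb => ?_).trans ?_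
  · simp [Ne.symm hb]
  · refine (Finset.sum_eq_single_of_mem i (Finset.mem_univ i) fun b _ hb => ?_).trans ?_
    · simp [Ne.symm hb]
    · split_ifs <;> first | ring1 | (exfalso; tauto)

lemma evalA :
    (∑ i, ∑ j, ∑ k, ∑ l, if i = j ∧ i ≠ k ∧ i ≠ l then
        r * (a i * x i * (a j * x j) * (a k * x k) * (a l * x l)) else 0)
    = r * ∑ i, ∑ j, ∑ l, (if i ≠ j ∧ i ≠ l then
        a i * x i * (a i * x i) * (a j * x j) * (a l * x l) else 0) := by
  rw [Finset.mul_sum]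
  refine Finset.sum_congr rfl fun i _ => ?_
  refine (Finset.sum_eq_single_of_mem i (Finset.mem_univ i) fun b _ hb => ?_).trans ?_
  · simp [Ne.symm hb]
  · rw [Finset.mul_sum]
    refine Finset.sum_congr rfl fun k _ => ?_
    rw [Finset.mul_sum]
    refine Finset.sum_congr rfl fun l _ => ?_
    split_ifs <;> first | ring1 | (exfalso; tauto)

lemma evalB :
    (∑ i, ∑ j, ∑ k, ∑ l, if k = l ∧ k ≠ i ∧ k ≠ j then
        r * (a i * x i * (a j * x j) * (a k * x k) * (a l * x l)) else 0)
    = r * ∑ i, ∑ j, ∑ l, (if i ≠ j ∧ i ≠ l then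
        a i * x i * (a i * x i) * (a j * x j) * (a l * x l) else 0) := by
  have h : (∑ i, ∑ j, ∑ k, ∑ l, if k = l ∧ k ≠ i ∧ k ≠ j then
        r * (a i * x i * (a j * x j) * (a k * x k) * (a l * x l)) else 0)
      = ∑ i, ∑ j, ∑ k, (if k ≠ i ∧ k ≠ j then
        r * (a i * x i * (a j * x j) * (a k * x k) * (a k * x k)) else 0) := by
    refine Finset.sum_congr rfl fun i _ => Finset.sum_congr rfl fun j _ =>
      Finset.sum_congr rfl fun k _ => ?_
    refine (Finset.sum_eq_single_of_mem k (Finset.mem_univ k) fun b _ hb => ?_).trans ?_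
    · simp [Ne.symm hb]
    · split_ifs <;> first | ring1 | (exfalso; tauto)
  have h2 : (∑ i, ∑ j, ∑ k, (if k ≠ i ∧ k ≠ j then
        r * (a i * x i * (a j * x j) * (a k * x k) * (a k * x k)) else 0))
      = ∑ i, ∑ k, ∑ j, (if k ≠ i ∧ k ≠ j then
        r * (a i * x i * (a j * x j) * (a k * x k) * (a k * x k)) else 0) :=
    Finset.sum_congr rfl fun i _ => Finset.sum_comm
  rw [h, h2, Finset.sum_comm, Finset.mul_sum]
  refine Finset.sum_congr rfl fun k _ => ?_
  rw [Finset.mul_sum]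
  refine Finset.sum_congr rfl fun i _ => ?_
  rw [Finset.mul_sum]
  refine Finset.sum_congr rfl fun j _ => ?_
  split_ifs <;> first | ring1 | (exfalso; tauto)

lemma evalAB :
    (∑ i, ∑ j, ∑ k, ∑ l, if i = j ∧ k = l ∧ i ≠ k then
        r * (a i * x i * (a j * x j) * (a k * x k) * (a l * x l)) else 0)
    = r * ∑ i, ∑ j, (if i ≠ j then
        a i * x i * (a i * x i) * (a j * x j) * (a j * x j) else 0) := by
  rw [Finset.mul_sum]
  refine Finset.sum_congr rfl fun i _ => ?_
  refine (Finset.sum_eq_single_of_mem i (Finset.mem_univ i) fun b _ hb => ?_).trans ?_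
  · simp [Ne.symm hb]
  · rw [Finset.mul_sum]
    refine Finset.sum_congr rfl fun k _ => ?_
    refine (Finset.sum_eq_single_of_mem k (Finset.mem_univ k) fun b _ hb => ?_).trans ?_
    · simp [Ne.symm hb]
    · split_ifs <;> first | ring1 | (exfalso; tauto)

lemma evalV :
    (∑ i, ∑ j, ∑ k, ∑ l, a i * x i * (a j * x j) * (a k * x k) * (a l * x l))
      = (∑ m, a m * x m) ^ 4 := by
  have h : (∑ m, a m * x m) ^ 4
      = (∑ i, a i * x i) * ((∑ j, a j * x j) * ((∑ k, a k * x k) * (∑ l, a l * x l))) := by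
    ring
  rw [h]
  simp only [Finset.sum_mul, Finset.mul_sum]
  refine Finset.sum_congr rfl fun i _ => Finset.sum_congr rfl fun j _ =>
    Finset.sum_congr rfl fun k _ => Finset.sum_congr rfl fun l _ => by ring

end evals

/-- For any `a, x ∈ ℝᵈ`, `⟨a,x⟩⁴ = ⟨Shift(a^{⊗4}), x^{⊗4}⟩`. -/
theorem inner_pow_four_eq_shift (d : ℕ) (a x : Fin d → ℝ) :
    (∑ j, a j * x j) ^ 4 =
      ∑ p : Fin d × Fin d, ∑ q : Fin d × Fin d,
        Shift (fun p q => a p.1 * a p.2 * a q.1 * a q.2) p q *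
          (x p.1 * x p.2 * x q.1 * x q.2) := by
  symm
  simp only [Fintype.sum_prod_type]
  calc (∑ i, ∑ j, ∑ k, ∑ l,
        Shift (fun p q => a p.1 * a p.2 * a q.1 * a q.2) (i, j) (k, l) *
          (x i * x j * x k * x l))
      = ∑ i, ∑ j, ∑ k, ∑ l,
        (a i * x i * (a j * x j) * (a k * x k) * (a l * x l)
        + (if i ≠ j ∧ k ≠ l ∧ i = k then (1/2) * (a i * x i * (a j * x j) * (a k * x k) * (a l * x l)) else 0)
        + (if i ≠ j ∧ k ≠ l ∧ i = l then (1/2) * (a i * x i * (a j * x j) * (a k * x k) * (a l * x l)) else 0)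
        + (if i ≠ j ∧ k ≠ l ∧ j = k then (1/2) * (a i * x i * (a j * x j) * (a k * x k) * (a l * x l)) else 0)
        + (if i ≠ j ∧ k ≠ l ∧ j = l then (1/2) * (a i * x i * (a j * x j) * (a k * x k) * (a l * x l)) else 0)
        + (if i ≠ j ∧ i = k ∧ j = l then (-(1/2)) * (a i * x i * (a j * x j) * (a k * x k) * (a l * x l)) else 0)
        + (if i ≠ j ∧ i = l ∧ j = k then (-(1/2)) * (a i * x i * (a j * x j) * (a k * x k) * (a l * x l)) else 0)
        + (if i = j ∧ i ≠ k ∧ i ≠ l then (-1) * (a i * x i * (a j * x j) * (a k * x k) * (a l * x l)) else 0)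
        + (if k = l ∧ k ≠ i ∧ k ≠ j then (-1) * (a i * x i * (a j * x j) * (a k * x k) * (a l * x l)) else 0)
        + (if i = j ∧ k = l ∧ i ≠ k then (1:ℝ) * (a i * x i * (a j * x j) * (a k * x k) * (a l * x l)) else 0)) :=
        Finset.sum_congr rfl fun i _ => Finset.sum_congr rfl fun j _ =>
          Finset.sum_congr rfl fun k _ => Finset.sum_congr rfl fun l _ =>
            shift_decomp a x i j k l
    _ = (∑ j, a j * x j) ^ 4 := by
        simp only [Finset.sum_add_distrib]
        rw [evalE1 a x (1/2), evalE2 a x (1/2), evalE3 a x (1/2), evalE4 a x (1/2),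
            evalF1 a x (-(1/2)), evalF2 a x (-(1/2)), evalA a x (-1), evalB a x (-1),
            evalAB a x 1, evalV a x]
        ring
end
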